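/- arXiv:2111.11568 — 3 statements merged into one kernel-verified Lean document; each statement's English description precedes it below -/
import Mathlib

section
/- Let G be a finite group that is unramified over a nontrivial abelian normal subgroup N. Then either [N,G] = N or [N,G] = G′ (the commutator subgroup of G). In particular, N ⊆ G′ or G′ ⊆ N. -/
open scoped BigOperators

noncomputable def charInner (G : Type) [Group G] (φ ψ : G → ℂ) : ℂ :=
  (Nat.card G : ℂ)⁻¹ * ∑ᶠ g, φ g * (starRingEnd ℂ) (ψ g)

/-- `χ` is the character of some irreducible complex representation of `G`. -/
def IsIrrChar (G : Type) [Group G] (χ : G → ℂ) : Prop :=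
  ∃ ρ : FDRep ℂ G, CategoryTheory.Simple ρ ∧ FDRep.character ρ = χ

/-- A class function is multiplicity free if it pairs with each irreducible
character with multiplicity at most one. -/
def MultFree (G : Type) [Group G] (φ : G → ℂ) : Prop :=
  ∀ μ : G → ℂ, IsIrrChar G μ → charInner G φ μ = 0 ∨ charInner G φ μ = 1

/-- `G` is unramified over `N`: every irreducible character of `G` restricts to `N`
multiplicity-freely or as a multiple of the trivial character. -/
def UnramifiedOver (G : Type) [Group G] (N : Subgroup G) : Prop :=
  ∀ χ : G → ℂ, IsIrrChar G χ →
    MultFree N (fun n : N => χ n) ∨ ∀ n : N, χ n = χ 1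

def PseudoUnramifiedOver (G : Type) [Group G] (N : Subgroup G) : Prop :=
  ∀ μ : ↥N → ℂ, IsIrrChar ↥N μ →
    ∃ χ : G → ℂ, IsIrrChar G χ ∧ charInner ↥N (fun n : N => χ n) μ ≠ 0 ∧
      MultFree ↥N (fun n : N => χ n)

/-- The conjugate character `ᵍμ(n) = μ(g⁻¹ n g)`. -/
def conjChar {G : Type} [Group G] (N : Subgroup G) [hN : N.Normal] (g : G)
    (μ : ↥N → ℂ) : ↥N → ℂ :=
  fun n => μ ⟨g⁻¹ * ↑n * g, hN.conj_mem' ↑n n.2 g⟩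

lemma conjChar_mul {G : Type} [Group G] (N : Subgroup G) [N.Normal] (a b : G)
    (μ : ↥N → ℂ) : conjChar N (a * b) μ = conjChar N a (conjChar N b μ) := by
  funext n
  simp [conjChar, mul_assoc]

lemma conjChar_one {G : Type} [Group G] (N : Subgroup G) [N.Normal]
    (μ : ↥N → ℂ) : conjChar N 1 μ = μ := by
  funext n
  simp [conjChar]

/-- The inertia subgroup of μ. -/
def inertia {G : Type} [Group G] (N : Subgroup G) [N.Normal] (μ : ↥N → ℂ) :
    Subgroup G where
  carrier := {g | conjChar N g μ = μ}
  one_mem' := conjChar_one N μ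
  mul_mem' := by
    intro a b ha hb
    simp only [Set.mem_setOf_eq] at *
    rw [conjChar_mul, hb, ha]
  inv_mem' := by
    intro a ha
    simp only [Set.mem_setOf_eq] at *
    conv_lhs => rw [← ha]
    rw [← conjChar_mul, inv_mul_cancel, conjChar_one]

/-!
Write `K = ⁅N, G⁆`. A linear character `μ` of `N` trivial on `K` is `G`-invariant, so `N` acts by
the scalar `μ` on every irreducible constituent `V` of `Ind_N^G μ`. Then `χ_V` restricts to `N` as
`(dim V) • μ`, which is a multiple of the trivial character only if `μ = 1`, and is multiplicity
free only if `dim V = 1`. Hence a nontrivial such `μ` extends to a linear character `λ` of `G`.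
Twisting by `λ`, the same argument shows that every irreducible representation of `G / N` is
one-dimensional, so `G' ≤ N`. And since `λ` is trivial on `G'`, an element `x ∈ N ∖ K` (separated
from `K` by some `μ`) is not in `G'`, i.e. `N ∩ G' ≤ K`. So either `K = N ≤ G'`, or `G' ≤ N` and
`G' = N ∩ G' ≤ K ≤ G'`.
-/

open CategoryTheory Limits Module Representation
open scoped commutatorElement

universe u

namespace Subrepresentation

variable {k G V : Type*} [Field k] [Monoid G] [AddCommGroup V] [Module k V]

instance nontrivial [Nontrivial V] (ρ : Representation k G V) :
    Nontrivial (Subrepresentation ρ) :=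
  ⟨⊥, ⊤, fun e => bot_ne_top (congrArg toSubmodule e)⟩

instance isAtomic [FiniteDimensional k V] (ρ : Representation k G V) :
    IsAtomic (Subrepresentation ρ) :=
  have : WellFoundedLT (Subrepresentation ρ) :=
    StrictMono.wellFoundedLT (f := toSubmodule) fun _ _ h => h
  isAtomic_of_orderBot_wellFounded_lt wellFounded_lt

theorem isIrreducible_toRepresentation_of_isAtom {ρ : Representation k G V}
    {S : Subrepresentation ρ} (hS : IsAtom S) : S.toRepresentation.IsIrreducible := by
  have : Nontrivial S.toSubmodule :=
    Submodule.nontrivial_iff_ne_bot.mpr fun e => hS.1 (toSubmodule_injective e)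
  refine { eq_bot_or_eq_top := fun T => ?_ }
  let T' : Subrepresentation ρ :=
    ⟨T.toSubmodule.map S.toSubmodule.subtype, by
      rintro g _ ⟨v, hv, rfl⟩
      exact ⟨S.toRepresentation g v, T.apply_mem_toSubmodule g hv, rfl⟩⟩
  have hT' : T' ≤ S := by
    rintro _ ⟨v, -, rfl⟩
    exact v.2
  have hmap := Submodule.map_injective_of_injective S.toSubmodule.injective_subtype
  refine (hS.le_iff.mp hT').imp (fun e => ?_) (fun e => ?_) <;>
    refine toSubmodule_injective (hmap ?_)
  · exact (congrArg toSubmodule e).trans (Submodule.map_bot _).symm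
  · exact (congrArg toSubmodule e).trans (Submodule.map_subtype_top _).symm

end Subrepresentation

namespace Representation

section Twist

variable {k G V : Type*} [CommSemiring k] [Monoid G] [AddCommMonoid V] [Module k V]

def twist (χ : G →* kˣ) (ρ : Representation k G V) : Representation k G V where
  toFun g := (χ g : k) • ρ g
  map_one' := by simp
  map_mul' g h := by
    rw [map_mul, map_mul, Units.val_mul, Module.End.mul_eq_comp, Module.End.mul_eq_comp,
      LinearMap.smul_comp, LinearMap.comp_smul, smul_smul]

@[simp]
theorem twist_apply (χ : G →* kˣ) (ρ : Representation k G V) (g : G) :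
    ρ.twist χ g = (χ g : k) • ρ g := rfl

end Twist

section Irreducible

variable {k G V : Type*} [Field k] [Monoid G] [AddCommGroup V] [Module k V]

theorem IsIrreducible.nontrivial (ρ : Representation k G V) [ρ.IsIrreducible] : Nontrivial V := by
  by_contra h
  rw [not_nontrivial_iff_subsingleton] at h
  exact (bot_ne_top : (⊥ : Subrepresentation ρ) ≠ ⊤)
    (Subrepresentation.toSubmodule_injective (Subsingleton.elim _ _))

theorem isIrreducible_of_finrank_eq_one (ρ : Representation k G V) (h : finrank k V = 1) :
    ρ.IsIrreducible := by
  have := nontrivial_of_finrank_eq_succ h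
  have := is_simple_module_of_finrank_eq_one (A := k) h
  refine { eq_bot_or_eq_top := fun T => ?_ }
  exact (eq_bot_or_eq_top T.toSubmodule).imp (fun e => Subrepresentation.toSubmodule_injective e)
    (fun e => Subrepresentation.toSubmodule_injective e)

end Irreducible

variable {k G V : Type*} [Field k] [Group G] [AddCommGroup V] [Module k V]

theorem exists_smul_id_of_finrank_eq_one (ρ : Representation k G V) (h : finrank k V = 1) :
    ∃ χ : G →* kˣ, ∀ g, ρ g = (χ g : k) • LinearMap.id := by
  have : Nontrivial V := nontrivial_of_finrank_eq_succ h
  have hbij : Function.Bijective (algebraMap k (Module.End k V)) :=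
    ⟨(algebraMap k (Module.End k V)).injective, fun u => by
      obtain ⟨c, hc⟩ := (u.existsUnique_eq_smul_id_of_finrank_eq_one h).exists
      exact ⟨c, by rw [hc, Module.algebraMap_end_eq_smul_id]⟩⟩
  let e := RingEquiv.ofBijective _ hbij
  refine ⟨(e.symm.toMonoidHom.comp ρ).toHomUnits, fun g => ?_⟩
  rw [← Module.algebraMap_end_eq_smul_id]
  exact (e.apply_symm_apply (ρ g)).symm

theorem apply_eq_id_of_mem_commutator [Finite G] [NeZero (Nat.card G : k)]
    [FiniteDimensional k V] (ρ : Representation k G V)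
    (h : ∀ S : Subrepresentation ρ, IsAtom S → finrank k S.toSubmodule = 1) {c : G}
    (hc : c ∈ commutator G) : ρ c = LinearMap.id := by
  -- An atom in a `G`-stable complement of `W` would be one-dimensional, hence fixed by `G'`.
  let W : Subrepresentation ρ :=
    ⟨invariants (ρ.comp (commutator G).subtype), fun g v hv d => by
      have hd : g⁻¹ * d * g ∈ commutator G := by
        simpa using (inferInstance : (commutator G).Normal).conj_mem d d.2 g⁻¹
      have := hv ⟨_, hd⟩
      simp only [MonoidHom.comp_apply, Subgroup.coe_subtype] at this ⊢
      rw [← Module.End.mul_apply, ← map_mul, show (d : G) * g = g * (g⁻¹ * d * g) by group,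
        map_mul, Module.End.mul_apply, this]⟩
  suffices hW : W = ⊤ by
    ext v
    exact (show v ∈ W from hW ▸ Submodule.mem_top) ⟨c, hc⟩
  obtain ⟨W', hW'⟩ := exists_isCompl W
  by_contra hW
  obtain ⟨S, hS, hSW'⟩ := (eq_bot_or_exists_atom_le W').resolve_left
    fun e => hW (eq_top_of_isCompl_bot (e ▸ hW'))
  obtain ⟨χ, hχ⟩ := S.toRepresentation.exists_smul_id_of_finrank_eq_one (h S hS)
  have hSW : S ≤ W := fun v hv d => by
    have := LinearMap.congr_fun (hχ d) ⟨v, hv⟩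
    rw [Abelianization.commutator_subset_ker χ d.2, Units.val_one, one_smul] at this
    exact congrArg Subtype.val this
  exact hS.1 (le_bot_iff.mp (hW'.disjoint hSW hSW'))

end Representation

namespace FDRep

section Monoid

variable {k G V : Type u} [Field k] [Monoid G] [AddCommGroup V] [Module k V]

theorem nontrivial_of_simple (X : FDRep k G) [Simple X] : Nontrivial X := by
  by_contra hX
  rw [not_nontrivial_iff_subsingleton] at hX
  exact id_nonzero X (by ext x; exact Subsingleton.elim _ _)

theorem simple_of_isIrreducible [FiniteDimensional k V] (ρ : Representation k G V)
    [ρ.IsIrreducible] : Simple (FDRep.of ρ) where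
  mono_isIso_iff_nonzero {Y} f _ := by
    have := IsIrreducible.nontrivial ρ
    refine ⟨fun _ hf => ?_, fun hf => ?_⟩
    · obtain ⟨v, hv⟩ := exists_ne (0 : V)
      subst hf
      have := ((isIsoZero_iff_source_target_isZero Y (FDRep.of ρ)).mp inferInstance).2
      exact hv (congrArg (fun u : FDRep.of ρ ⟶ FDRep.of ρ => u.hom v) (this.eq_of_src (𝟙 _) 0))
    let F := (forget₂ (FDRep k G) (Rep k G)).map f
    let R : Subrepresentation ρ :=
      ⟨LinearMap.range f.hom.hom.hom, by
        rintro g _ ⟨y, rfl⟩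
        exact ⟨Y.ρ g y, Rep.hom_comm_apply F g y⟩⟩
    refine (ConcreteCategory.isIso_iff_bijective f).mpr
      ⟨(Rep.mono_iff_injective F).mp inferInstance, fun v => ?_⟩
    rcases IsSimpleOrder.eq_bot_or_eq_top R with hR | hR
    · refine absurd ?_ hf
      ext y
      have : f.hom y ∈ R := ⟨y, rfl⟩
      rw [hR] at this
      exact (Submodule.mem_bot k).mp this
    · exact (hR ▸ Submodule.mem_top : v ∈ R)

theorem character_of_twist [FiniteDimensional k V] (χ : G →* kˣ) (ρ : Representation k G V)
    (g : G) : (FDRep.of (ρ.twist χ)).character g = χ g * (FDRep.of ρ).character g := by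
  simp [FDRep.character]

end Monoid

variable {k G V : Type u} [Field k] [Group G] [AddCommGroup V] [Module k V]

theorem simple_of_twist [FiniteDimensional k V] [IsAlgClosed k] [CharZero k] [Fintype G]
    (χ : G →* kˣ) (ρ : Representation k G V) [Simple (FDRep.of ρ)] :
    Simple (FDRep.of (ρ.twist χ)) := by
  rw [simple_iff_char_is_norm_one, ← (simple_iff_char_is_norm_one (FDRep.of ρ)).mp ‹_›]
  refine Finset.sum_congr rfl fun g _ => ?_
  rw [character_of_twist, character_of_twist, map_inv, Units.val_inv_eq_inv_val]
  field_simp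

end FDRep

theorem map_conj_eq_of_commutator_subgroupOf_le_ker {G M : Type*} [Group G] [MulOneClass M]
    {N : Subgroup G} [hN : N.Normal] {μ : N →* M}
    (hμ : (⁅N, ⊤⁆ : Subgroup G).subgroupOf N ≤ μ.ker) (g : G) (n : N) :
    μ ⟨g * n * g⁻¹, hN.conj_mem n n.2 g⟩ = μ n := by
  have hc : ⁅g, (n : G)⁆ ∈ ⁅N, (⊤ : Subgroup G)⁆ := by
    rw [Subgroup.commutator_comm]
    exact Subgroup.commutator_mem_commutator (Subgroup.mem_top g) n.2
  have : (⟨g * n * g⁻¹, hN.conj_mem n n.2 g⟩ : N) =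
      ⟨⁅g, (n : G)⁆, Subgroup.commutator_le_left N ⊤ hc⟩ * n := by
    ext; simp [commutatorElement_def, mul_assoc]
  rw [this, map_mul, hμ (Subgroup.mem_subgroupOf.mpr hc), one_mul]

namespace Representation

variable {k G : Type*} [Field k] [Group G] {N : Subgroup G}

abbrev coindChar (N : Subgroup G) (μ : N →* kˣ) :
    Representation k G (coindV N.subtype ((trivial k N k).twist μ)) :=
  coind N.subtype ((trivial k N k).twist μ)

theorem coindChar_apply_of_mem [hN : N.Normal] {μ : N →* kˣ}
    (hμ : (⁅N, ⊤⁆ : Subgroup G).subgroupOf N ≤ μ.ker) (n : N) :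
    coindChar N μ n = (μ n : k) • LinearMap.id := by
  ext ⟨f, hf⟩ x
  have hx : x * n = (⟨x * n * x⁻¹, hN.conj_mem n n.2 x⟩ : N) * x := by simp
  change f (x * n) = (μ n : k) * f x
  rw [hx]
  refine (hf ⟨x * n * x⁻¹, hN.conj_mem n n.2 x⟩ x).trans ?_
  simp [map_conj_eq_of_commutator_subgroupOf_le_ker hμ]

theorem exists_mem_coindV (μ : N →* kˣ) :
    ∃ f ∈ coindV N.subtype ((trivial k N k).twist μ), f 1 = 1 ∧ ∀ x ∉ N, f x = 0 := by
  classical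
  refine ⟨fun x => if hx : x ∈ N then (μ ⟨x, hx⟩ : k) else 0, fun n x => ?_, ?_,
    fun x hx => dif_neg hx⟩
  · by_cases hx : x ∈ N
    · have : (⟨n * x, mul_mem n.2 hx⟩ : N) = n * ⟨x, hx⟩ := rfl
      simp [hx, mul_mem n.2 hx, this]
    · simp [hx, (Subgroup.mul_mem_cancel_left N n.2).not.mpr hx]
  · beta_reduce
    rw [dif_pos N.one_mem]
    exact congrArg Units.val μ.map_one

end Representation

section LinearCharacters

variable {H : Type} [Group H]

theorem norm_units_hom_apply [Finite H] (μ : H →* ℂˣ) (h : H) : ‖(μ h : ℂ)‖ = 1 :=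
  ((Units.coeHom ℂ).comp μ |>.isOfFinOrder (isOfFinOrder_of_finite h)).norm_eq_one

theorem charInner_mul_units_hom [Finite H] (μ : H →* ℂˣ) (c : ℂ) :
    charInner H (fun h => c * μ h) (fun h => μ h) = c := by
  have := Fintype.ofFinite H
  have hterm (h : H) : c * μ h * (starRingEnd ℂ) (μ h) = c := by
    rw [mul_assoc, Complex.mul_conj', norm_units_hom_apply, Complex.ofReal_one, one_pow, mul_one]
  simp only [charInner, finsum_eq_sum_of_fintype, hterm, Finset.sum_const, Finset.card_univ,
    nsmul_eq_mul, Nat.card_eq_fintype_card]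
  field_simp

theorem isIrrChar_units_hom (μ : H →* ℂˣ) : IsIrrChar H (fun h => μ h) := by
  have := ((trivial ℂ H ℂ).twist μ).isIrreducible_of_finrank_eq_one (finrank_self ℂ)
  refine ⟨FDRep.of ((trivial ℂ H ℂ).twist μ), FDRep.simple_of_isIrreducible _, funext fun h => ?_⟩
  simp [FDRep.character]

theorem exists_units_hom_ne_one_of_notMem {A : Type*} [CommGroup A] [Finite A] {K : Subgroup A}
    {x : A} (hx : x ∉ K) : ∃ μ : A →* ℂˣ, K ≤ μ.ker ∧ μ x ≠ 1 := by
  have : NeZero (Monoid.exponent (A ⧸ K)) := ⟨Monoid.exponent_ne_zero_of_finite⟩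
  obtain ⟨φ, hφ⟩ := CommGroup.exists_apply_ne_one_of_hasEnoughRootsOfUnity (A ⧸ K) ℂ
    (mt (QuotientGroup.eq_one_iff x).mp hx)
  refine ⟨φ.comp (QuotientGroup.mk' K), fun y hy => ?_, hφ⟩
  simp [MonoidHom.mem_ker, (QuotientGroup.eq_one_iff y).mpr hy]

end LinearCharacters

section Unramified

variable {G : Type} [Group G] [Finite G] {N : Subgroup G}

theorem finrank_eq_one_of_unramified (h : UnramifiedOver G N) {μ : N →* ℂˣ} (hμ : μ ≠ 1)
    {V : Type} [AddCommGroup V] [Module ℂ V] [FiniteDimensional ℂ V] (ρ : Representation ℂ G V)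
    [Simple (FDRep.of ρ)] (hρ : ∀ n : N, ρ n = (μ n : ℂ) • LinearMap.id) :
    finrank ℂ V = 1 := by
  have hχ (n : N) : (FDRep.of ρ).character n = finrank ℂ V * μ n := by
    rw [FDRep.character, FDRep.of_ρ', hρ, map_smul, LinearMap.trace_id, smul_eq_mul, mul_comm]
  have := FDRep.nontrivial_of_simple (FDRep.of ρ)
  have hd : finrank ℂ V ≠ 0 := finrank_pos.ne'
  rcases h _ ⟨FDRep.of ρ, ‹_›, rfl⟩ with hmf | hconst
  · have := hmf _ (isIrrChar_units_hom μ)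
    simp only [hχ, charInner_mul_units_hom, Nat.cast_eq_zero, Nat.cast_eq_one] at this
    exact this.resolve_left hd
  · obtain ⟨a, ha⟩ := DFunLike.ne_iff.mp hμ
    have := hconst a
    rw [hχ, FDRep.char_one, mul_eq_left₀ (Nat.cast_ne_zero.mpr hd)] at this
    exact absurd (Units.ext this) ha

variable [N.Normal]

theorem exists_extension_of_unramified (h : UnramifiedOver G N) {μ : N →* ℂˣ} (hμ : μ ≠ 1)
    (hμK : (⁅N, ⊤⁆ : Subgroup G).subgroupOf N ≤ μ.ker) :
    ∃ χ : G →* ℂˣ, ∀ n : N, χ n = μ n := by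
  obtain ⟨f, hf, hf1, -⟩ := exists_mem_coindV μ
  have : Nontrivial (coindV N.subtype ((trivial ℂ N ℂ).twist μ)) :=
    ⟨⟨f, hf⟩, 0, fun e => by simpa [hf1] using congrArg (fun u => u.1 1) e⟩
  obtain ⟨S, hS, -⟩ :=
    (eq_bot_or_exists_atom_le (⊤ : Subrepresentation (coindChar N μ))).resolve_left top_ne_bot
  have := S.isIrreducible_toRepresentation_of_isAtom hS
  have := FDRep.simple_of_isIrreducible (V := S.toSubmodule) S.toRepresentation
  have hV (n : N) : S.toRepresentation n = (μ n : ℂ) • LinearMap.id :=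
    LinearMap.ext fun v => Subtype.ext (LinearMap.congr_fun (coindChar_apply_of_mem hμK n) v.1)
  obtain ⟨χ, hχ⟩ := exists_smul_id_of_finrank_eq_one (V := S.toSubmodule) S.toRepresentation
    (finrank_eq_one_of_unramified h hμ (V := S.toSubmodule) S.toRepresentation hV)
  have : Nontrivial S.toSubmodule := Submodule.nontrivial_iff_ne_bot.mpr
    fun e => hS.1 (Subrepresentation.toSubmodule_injective e)
  refine ⟨χ, fun n => Units.ext ((algebraMap ℂ (Module.End ℂ S.toSubmodule)).injective ?_)⟩
  rw [Module.algebraMap_end_eq_smul_id, Module.algebraMap_end_eq_smul_id, ← hχ, hV]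

theorem commutator_le_of_unramified (h : UnramifiedOver G N) (χ : G →* ℂˣ) (hχ : ¬N ≤ χ.ker) :
    commutator G ≤ N := by
  have := Fintype.ofFinite G
  have hμ : χ.comp N.subtype ≠ 1 := fun e =>
    hχ fun n hn => by simpa using DFunLike.congr_fun e ⟨n, hn⟩
  have htriv : (⁅N, ⊤⁆ : Subgroup G).subgroupOf N ≤ (1 : N →* ℂˣ).ker := by simp
  have hdim (S : Subrepresentation (coindChar N (1 : N →* ℂˣ))) (hS : IsAtom S) :
      finrank ℂ S.toSubmodule = 1 := by
    have := S.isIrreducible_toRepresentation_of_isAtom hS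
    have := FDRep.simple_of_isIrreducible (V := S.toSubmodule) S.toRepresentation
    have := FDRep.simple_of_twist χ (V := S.toSubmodule) S.toRepresentation
    refine finrank_eq_one_of_unramified h hμ (V := S.toSubmodule) (S.toRepresentation.twist χ)
      fun n => ?_
    have hS1 : S.toRepresentation n = LinearMap.id := LinearMap.ext fun v => Subtype.ext <|
      (LinearMap.congr_fun (coindChar_apply_of_mem htriv n) v.1).trans (by simp)
    rw [twist_apply, hS1]
    rfl
  intro c hc
  obtain ⟨f, hf, hf1, hf0⟩ := exists_mem_coindV (1 : N →* ℂˣ)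
  have hfc := LinearMap.congr_fun (apply_eq_id_of_mem_commutator
    (V := coindV N.subtype ((trivial ℂ N ℂ).twist 1)) _ hdim hc) ⟨f, hf⟩
  by_contra hcN
  have : f (1 * c) = f 1 := congrArg (fun u => u.1 1) hfc
  rw [one_mul, hf1, hf0 c hcN] at this
  exact zero_ne_one this

theorem exists_units_hom_ne_one_of_unramified (h : UnramifiedOver G N)
    (hab : ∀ a b : N, a * b = b * a) {x : G} (hxN : x ∈ N) (hxK : x ∉ ⁅N, (⊤ : Subgroup G)⁆) :
    ∃ χ : G →* ℂˣ, χ x ≠ 1 := by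
  let : CommGroup N := { mul_comm := hab }
  obtain ⟨μ, hμK, hμx⟩ := exists_units_hom_ne_one_of_notMem
    (K := (⁅N, ⊤⁆ : Subgroup G).subgroupOf N) (x := ⟨x, hxN⟩) (by rwa [Subgroup.mem_subgroupOf])
  obtain ⟨χ, hχ⟩ := exists_extension_of_unramified h (fun e => hμx (by simp [e])) hμK
  exact ⟨χ, by rwa [← hχ] at hμx⟩

theorem inf_commutator_le_of_unramified (h : UnramifiedOver G N)
    (hab : ∀ a b : N, a * b = b * a) : N ⊓ commutator G ≤ ⁅N, ⊤⁆ := by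
  rintro x ⟨hxN, hxG⟩
  by_contra hxK
  obtain ⟨χ, hχ⟩ := exists_units_hom_ne_one_of_unramified h hab hxN hxK
  exact hχ (Abelianization.commutator_subset_ker χ hxG)

end Unramified

theorem stmt_6_general {G : Type} [Group G] [Finite G] (N : Subgroup G) [N.Normal]
    (hab : ∀ a b : ↥N, a * b = b * a)
    (h : UnramifiedOver G N) :
    (⁅N, (⊤ : Subgroup G)⁆ = N ∨ ⁅N, (⊤ : Subgroup G)⁆ = commutator G) ∧
    (N ≤ commutator G ∨ commutator G ≤ N) := by
  have hKG : ⁅N, (⊤ : Subgroup G)⁆ ≤ commutator G := by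
    rw [commutator_def]
    exact Subgroup.commutator_mono le_top le_rfl
  by_cases hKN : ⁅N, (⊤ : Subgroup G)⁆ = N
  · exact ⟨Or.inl hKN, Or.inl (hKN ▸ hKG)⟩
  obtain ⟨x, hxN, hxK⟩ := SetLike.exists_of_lt ((Subgroup.commutator_le_left N ⊤).lt_of_ne hKN)
  obtain ⟨χ, hχ⟩ := exists_units_hom_ne_one_of_unramified h hab hxN hxK
  have hGN := commutator_le_of_unramified h χ fun hN => hχ (hN hxN)
  exact ⟨Or.inr (hKG.antisymm ((le_inf hGN le_rfl).trans (inf_commutator_le_of_unramified h hab))),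
    Or.inr hGN⟩

/-- If G is unramified over a nontrivial abelian normal subgroup N, then
[N,G] = N or [N,G] = G'; in particular N ⊆ G' or G' ⊆ N. -/
theorem stmt_6 {G : Type} [Group G] [Finite G] (N : Subgroup G) [N.Normal]
    (hab : ∀ a b : ↥N, a * b = b * a) (hbot : N ≠ ⊥)
    (h : UnramifiedOver G N) :
    (⁅N, (⊤ : Subgroup G)⁆ = N ∨ ⁅N, (⊤ : Subgroup G)⁆ = commutator G) ∧
    (N ≤ commutator G ∨ commutator G ≤ N) :=
  stmt_6_general N hab h
end

section
/- Let φ : G → H be a surjective homomorphism of finite groups. Suppose G is unramified over a nontrivial abelian normal subgroup N and M := φ(N) is nontrivial. Then M is an abelian normal subgroup of H and H is unramified over M. -/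
open scoped BigOperators

/-!
Inflation along a surjection `φ : G →* H` preserves irreducibility: each fibre of `φ` has
`|ker φ|` elements, so `∑ g, χ (φ g) χ (φ g⁻¹) = |ker φ| |H| = |G|`. By the same count,
inflation preserves the inner product of class functions. The restriction to `N` of an inflated
character `χ ∘ φ` is the inflation of `χ|_M` along the surjection `N → M = φ(N)`, so whichever
alternative of unramifiedness `χ ∘ φ` satisfies over `N` passes to `χ` over `M`.
-/

open CategoryTheory

universe u

theorem MonoidHom.sum_comp_of_surjective {G H M : Type*} [Group G] [Group H] [Fintype G]
    [Fintype H] [AddCommMonoid M] {φ : G →* H} (hφ : Function.Surjective φ) (f : H → M) :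
    ∑ g, f (φ g) = Nat.card φ.ker • ∑ h, f h := by
  classical
  rw [← Finset.sum_fiberwise Finset.univ φ, Finset.smul_sum]
  refine Finset.sum_congr rfl fun h _ => ?_
  rw [Finset.sum_congr rfl fun g hg => congrArg f (Finset.mem_filter.1 hg).2, Finset.sum_const,
    ← Fintype.card_subtype, ← Nat.card_eq_fintype_card]
  exact congrArg (· • f h) (Nat.card_congr (φ.fiberEquivKerOfSurjective hφ h))

theorem MonoidHom.card_eq_card_ker_mul_of_surjective {G H : Type*} [Group G] [Group H] [Finite G]
    [Finite H] {φ : G →* H} (hφ : Function.Surjective φ) :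
    Nat.card G = Nat.card φ.ker * Nat.card H := by
  have := Fintype.ofFinite G
  have := Fintype.ofFinite H
  have := φ.sum_comp_of_surjective hφ (fun _ => 1)
  simp only [Finset.sum_const, Finset.card_univ, smul_eq_mul, mul_one] at this
  rw [Nat.card_eq_fintype_card (α := G), Nat.card_eq_fintype_card (α := H), this]

theorem charInner_comp_of_surjective {G H : Type} [Group G] [Group H] [Finite G] [Finite H]
    {φ : G →* H} (hφ : Function.Surjective φ) (f₁ f₂ : H → ℂ) :
    charInner G (fun g => f₁ (φ g)) (fun g => f₂ (φ g)) = charInner H f₁ f₂ := by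
  have := Fintype.ofFinite G
  have := Fintype.ofFinite H
  have hker : (Nat.card φ.ker : ℂ) ≠ 0 := Nat.cast_ne_zero.2 Nat.card_pos.ne'
  simp only [charInner, finsum_eq_sum_of_fintype]
  rw [φ.sum_comp_of_surjective hφ (fun h => f₁ h * starRingEnd ℂ (f₂ h)),
    φ.card_eq_card_ker_mul_of_surjective hφ, nsmul_eq_mul, Nat.cast_mul, mul_inv,
    mul_assoc, mul_left_comm _ (Nat.card H : ℂ)⁻¹, inv_mul_cancel_left₀ hker]

theorem FDRep.simple_of_surjective {k G H : Type u} [Field k] [IsAlgClosed k] [CharZero k]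
    [Group G] [Group H] [Finite G] [Finite H] {φ : G →* H} (hφ : Function.Surjective φ)
    (ρ : FDRep k H) [Simple ρ] : Simple (FDRep.of (ρ.ρ.comp φ)) := by
  have := Fintype.ofFinite G
  have := Fintype.ofFinite H
  have hρ := (simple_iff_char_is_norm_one ρ).1 ‹_›
  rw [simple_iff_char_is_norm_one]
  change ∑ g, ρ.character (φ g) * ρ.character (φ g⁻¹) = _
  simp_rw [map_inv]
  rw [φ.sum_comp_of_surjective hφ (fun h => ρ.character h * ρ.character h⁻¹), hρ,
    φ.card_eq_card_ker_mul_of_surjective hφ, nsmul_eq_mul, Nat.cast_mul]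

section Inflation

variable {G H : Type} [Group G] [Group H] [Finite G] [Finite H] {φ : G →* H}

theorem IsIrrChar.comp (hφ : Function.Surjective φ) {χ : H → ℂ} (hχ : IsIrrChar H χ) :
    IsIrrChar G (fun g => χ (φ g)) := by
  obtain ⟨ρ, hρ, rfl⟩ := hχ
  exact ⟨FDRep.of (ρ.ρ.comp φ), FDRep.simple_of_surjective hφ ρ, rfl⟩

theorem MultFree.of_comp (hφ : Function.Surjective φ) {f : H → ℂ}
    (hf : MultFree G (fun g => f (φ g))) : MultFree H f := fun μ hμ => by
  simpa only [charInner_comp_of_surjective hφ] using hf _ (hμ.comp hφ)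

theorem UnramifiedOver.map (hφ : Function.Surjective φ) {N : Subgroup G}
    (hN : UnramifiedOver G N) : UnramifiedOver H (N.map φ) := by
  intro χ hχ
  refine (hN _ (hχ.comp hφ)).imp (MultFree.of_comp (φ.subgroupMap_surjective N)) ?_
  rintro htriv ⟨_, x, hx, rfl⟩
  simpa using htriv ⟨x, hx⟩

end Inflation

theorem stmt_10_general {G H : Type} [Group G] [Group H] [Finite G] [Finite H]
    (φ : G →* H) (hφ : Function.Surjective φ) (N : Subgroup G) [N.Normal]
    (hab : ∀ a b : ↥N, a * b = b * a)
    (hunr : UnramifiedOver G N) :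
    (N.map φ).Normal ∧ (∀ a b : ↥(N.map φ), a * b = b * a) ∧
      UnramifiedOver H (N.map φ) := by
  have : IsMulCommutative N := ⟨⟨hab⟩⟩
  exact ⟨.map ‹_› φ hφ, mul_comm', hunr.map hφ⟩

/-- Unramifiedness passes to quotients: if φ : G → H is surjective, G is
unramified over the nontrivial abelian normal subgroup N, and M = φ(N) is
nontrivial, then M is an abelian normal subgroup of H and H is unramified
over M. -/
theorem stmt_10 {G H : Type} [Group G] [Group H] [Finite G] [Finite H]
    (φ : G →* H) (hφ : Function.Surjective φ) (N : Subgroup G) [N.Normal]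
    (hab : ∀ a b : ↥N, a * b = b * a) (hbot : N ≠ ⊥)
    (hunr : UnramifiedOver G N) (hMbot : N.map φ ≠ ⊥) :
    (N.map φ).Normal ∧ (∀ a b : ↥(N.map φ), a * b = b * a) ∧
      UnramifiedOver H (N.map φ) :=
  stmt_10_general φ hφ N hab hunr
end

section
/- Every finite p-group G of order p⁴ (p prime) contains an abelian normal subgroup N of order p³, and then G/N is cyclic of order p. -/
open Subgroup

/-- A group of order `p ^ 3` whose center has order divisible by `p ^ 2` is commutative. -/
lemma aux_comm_of_big_center {H : Type*} [Group H] [Finite H] {p : ℕ} [Fact p.Prime]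
    (hH : Nat.card H = p ^ 3) (h2 : p ^ 2 ∣ Nat.card (Subgroup.center H)) :
    ∀ a b : H, a * b = b * a := by
  have hp : p.Prime := Fact.out
  have hmul : Nat.card (H ⧸ center H) * Nat.card (center H) = p ^ 3 := by
    rw [← hH, Subgroup.card_eq_card_quotient_mul_card_subgroup (center H)]
  have hdvd : Nat.card (H ⧸ center H) ∣ p := by
    have h1 : Nat.card (H ⧸ center H) * p ^ 2 ∣ Nat.card (H ⧸ center H) * Nat.card (center H) :=
      mul_dvd_mul_left _ h2
    rw [hmul] at h1
    have h3 : p ^ 3 = p * p ^ 2 := by ring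
    rw [h3] at h1
    exact (Nat.mul_dvd_mul_iff_right (Nat.pow_pos (n := 2) hp.pos)).mp h1
  have : IsCyclic (H ⧸ center H) := isCyclic_of_card_dvd_prime hdvd
  exact commutative_of_cyclic_center_quotient (QuotientGroup.mk' (center H)) (le_of_eq
    (QuotientGroup.ker_mk' _))

lemma aux_card_quot {G : Type*} [Group G] [Finite G] {p : ℕ} (hp : p.Prime)
    (hG : Nat.card G = p ^ 4) (N : Subgroup G) (hN : Nat.card N = p ^ 3) :
    Nat.card (G ⧸ N) = p := by
  have hmul : Nat.card (G ⧸ N) * Nat.card N = p ^ 4 := by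
    rw [← hG, Subgroup.card_eq_card_quotient_mul_card_subgroup N]
  rw [hN] at hmul
  have h4 : p ^ 4 = p * p ^ 3 := by ring
  rw [h4] at hmul
  exact Nat.eq_of_mul_eq_mul_right (Nat.pow_pos (n := 3) hp.pos) hmul

/-- Every finite p-group of order p⁴ contains an abelian normal subgroup of
order p³, and the quotient by it is cyclic (of order p). -/
theorem stmt_18 {G : Type*} [Group G] [Finite G] (p : ℕ) (hp : p.Prime)
    (hG : Nat.card G = p ^ 4) :
    ∃ (N : Subgroup G) (hN : N.Normal), (∀ a b : ↥N, a * b = b * a) ∧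
      Nat.card ↥N = p ^ 3 ∧ (letI := hN; IsCyclic (G ⧸ N)) := by
  have : Fact p.Prime := ⟨hp⟩
  have hpg : IsPGroup p G := IsPGroup.of_card hG
  have hZdvd : Nat.card (center G) ∣ p ^ 4 := hG ▸ Subgroup.card_subgroup_dvd_card (center G)
  obtain ⟨k, hk4, hkeq⟩ := (Nat.dvd_prime_pow hp).1 hZdvd
  have hkpos : 0 < k := by
    by_contra h
    push_neg at h
    interval_cases k
    · have : Nontrivial G := by
        have : 1 < Nat.card G := by
          rw [hG]; exact Nat.one_lt_pow (by norm_num) hp.one_lt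
        exact Finite.one_lt_card_iff_nontrivial.mp this
      have := hpg.center_nontrivial
      have h1 : 1 < Nat.card (center G) := Finite.one_lt_card_iff_nontrivial.mpr this
      simp [hkeq] at h1
  -- helper to package the final answer
  have finish : ∀ N : Subgroup G, N.Normal → (∀ a b : ↥N, a * b = b * a) →
      Nat.card ↥N = p ^ 3 →
      ∃ (N : Subgroup G) (hN : N.Normal), (∀ a b : ↥N, a * b = b * a) ∧
        Nat.card ↥N = p ^ 3 ∧ (letI := hN; IsCyclic (G ⧸ N)) := by
    intro N hN hcomm hcard
    refine ⟨N, hN, hcomm, hcard, ?_⟩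
    exact isCyclic_of_prime_card (aux_card_quot hp hG N hcard)
  interval_cases k
  · -- |Z| = p
    rw [pow_one] at hkeq
    have hGnt : Nontrivial G := by
      have : 1 < Nat.card G := by
        rw [hG]; exact Nat.one_lt_pow (by norm_num) hp.one_lt
      exact Finite.one_lt_card_iff_nontrivial.mp this
    have hpq : IsPGroup p (G ⧸ center G) := hpg.to_quotient (center G)
    have hqcard : Nat.card (G ⧸ center G) = p ^ 3 := by
      have hmul : Nat.card G = Nat.card (G ⧸ center G) * Nat.card (center G) :=
        Subgroup.card_eq_card_quotient_mul_card_subgroup (center G)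
      rw [hG, hkeq] at hmul
      have h4 : p ^ 4 = p ^ 3 * p := by ring
      rw [h4] at hmul
      exact (Nat.eq_of_mul_eq_mul_right hp.pos hmul.symm)
    have hqnt : Nontrivial (G ⧸ center G) := by
      apply Finite.one_lt_card_iff_nontrivial.mp
      rw [hqcard]; exact Nat.one_lt_pow (by norm_num) hp.one_lt
    have hcnt : Nontrivial (center (G ⧸ center G)) := hpq.center_nontrivial
    obtain ⟨xbar, hxbar⟩ := exists_ne (1 : center (G ⧸ center G))
    obtain ⟨x, hx⟩ := QuotientGroup.mk'_surjective (center G) (xbar : G ⧸ center G)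
    have hxmem : ∀ g : G, g * x * g⁻¹ * x⁻¹ ∈ center G := by
      intro g
      have h1 : QuotientGroup.mk' (center G) (g * x * g⁻¹ * x⁻¹) = 1 := by
        simp only [map_mul, map_inv, hx]
        rw [Subgroup.mem_center_iff.mp xbar.2 (QuotientGroup.mk' (center G) g)]
        group
      rw [← QuotientGroup.ker_mk' (center G)]
      exact h1
    have hφmul : ∀ a b : G, (a * b) * x * (a * b)⁻¹ * x⁻¹ =
        (a * x * a⁻¹ * x⁻¹) * (b * x * b⁻¹ * x⁻¹) := by
      intro a b
      have hc : ∀ w : G, w * (b * x * b⁻¹ * x⁻¹) = (b * x * b⁻¹ * x⁻¹) * w := fun w =>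
        Subgroup.mem_center_iff.mp (hxmem b) w
      have h1 : (a * b) * x * (a * b)⁻¹ * x⁻¹ =
          a * (b * x * b⁻¹ * x⁻¹) * (x * a⁻¹ * x⁻¹) := by group
      have h2 : a * (b * x * b⁻¹ * x⁻¹) = (b * x * b⁻¹ * x⁻¹) * a := hc a
      rw [h1, h2, hc (a * x * a⁻¹ * x⁻¹)]
      group
    let φ : G →* center G := MonoidHom.mk' (fun g => ⟨g * x * g⁻¹ * x⁻¹, hxmem g⟩)
      (fun a b => Subtype.ext (hφmul a b))
    have hφ : ∀ g : G, (φ g : G) = g * x * g⁻¹ * x⁻¹ := fun g => rfl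
    have hxnotZ : x ∉ center G := by
      intro hmem
      apply hxbar
      have : (xbar : G ⧸ center G) = 1 := by
        rw [← hx]
        exact (QuotientGroup.eq_one_iff x).mpr hmem
      exact Subtype.ext this
    obtain ⟨g, hg⟩ : ∃ g : G, g * x * g⁻¹ * x⁻¹ ≠ 1 := by
      by_contra h
      push_neg at h
      apply hxnotZ
      rw [Subgroup.mem_center_iff]
      intro g
      have h1 := h g
      have : g * x * g⁻¹ * x⁻¹ * (x * g) = 1 * (x * g) := by rw [h1]
      calc g * x = g * x * g⁻¹ * x⁻¹ * (x * g) := by group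
        _ = 1 * (x * g) := this
        _ = x * g := one_mul _
    set C := φ.ker with hCdef
    have hCnormal : C.Normal := φ.normal_ker
    have hrange_dvd : Nat.card φ.range ∣ p := by
      rw [← hkeq]; exact Subgroup.card_subgroup_dvd_card φ.range
    have hrange_ne : Nat.card φ.range ≠ 1 := by
      intro h
      have hbot : φ.range = ⊥ := Subgroup.card_eq_one.mp h
      apply hg
      have hmem : φ g ∈ φ.range := ⟨g, rfl⟩
      rw [hbot, Subgroup.mem_bot] at hmem
      have := congrArg (Subtype.val) hmem
      rw [hφ g] at this
      exact this
    have hrange : Nat.card φ.range = p := ((Nat.dvd_prime hp).1 hrange_dvd).resolve_left hrange_ne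
    have hCindex : C.index = p := by rw [hCdef, Subgroup.index_ker, hrange]
    have hCcard : Nat.card C = p ^ 3 := by
      have h1 := Subgroup.card_mul_index C
      rw [hCindex, hG] at h1
      have h4 : p ^ 4 = p ^ 3 * p := by ring
      rw [h4] at h1
      exact Nat.eq_of_mul_eq_mul_right hp.pos h1
    have hxC : x ∈ C := by
      have : φ x = 1 := Subtype.ext (by rw [hφ x, OneMemClass.coe_one]; group)
      exact this
    obtain ⟨z0, hz0⟩ := exists_prime_orderOf_dvd_card' (G := center G) p (by rw [hkeq])
    set z : G := (z0 : G) with hzdef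
    have hzZ : z ∈ center G := z0.2
    have hz_order : orderOf z = p := by rw [Subgroup.orderOf_coe z0, hz0]
    have hzC : z ∈ C := by
      have : φ z = 1 := Subtype.ext (by
        rw [hφ z, OneMemClass.coe_one, ← Subgroup.mem_center_iff.mp hzZ x]
        group)
      exact this
    have hzCne : (⟨z, hzC⟩ : C) ≠ 1 := by
      intro h
      have hz1 : z = 1 := congrArg Subtype.val h
      rw [hz1, orderOf_one] at hz_order
      exact hp.one_lt.ne' hz_order.symm
    have hzC_central : (⟨z, hzC⟩ : C) ∈ center C := by
      rw [Subgroup.mem_center_iff]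
      intro m
      exact Subtype.ext (Subgroup.mem_center_iff.mp hzZ (m : G))
    have hxC_central : (⟨x, hxC⟩ : C) ∈ center C := by
      rw [Subgroup.mem_center_iff]
      intro m
      have hm : (φ (m : G) : G) = 1 := by
        have : φ (m : G) = 1 := m.2
        rw [this]; rfl
      rw [hφ (m : G)] at hm
      apply Subtype.ext
      show (m : G) * x = x * (m : G)
      have : (m : G) * x * (m : G)⁻¹ * x⁻¹ * (x * (m : G)) = 1 * (x * (m : G)) := by rw [hm]
      calc (m : G) * x = (m : G) * x * (m : G)⁻¹ * x⁻¹ * (x * (m : G)) := by group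
        _ = 1 * (x * (m : G)) := this
        _ = x * (m : G) := one_mul _
    have hcc_dvd : Nat.card (center C) ∣ p ^ 3 := by
      rw [← hCcard]; exact Subgroup.card_subgroup_dvd_card (center C)
    obtain ⟨j, hj3, hjeq⟩ := (Nat.dvd_prime_pow hp).1 hcc_dvd
    have hj0 : j ≠ 0 := by
      intro h
      rw [h, pow_zero, Subgroup.card_eq_one] at hjeq
      rw [hjeq, Subgroup.mem_bot] at hzC_central
      exact hzCne hzC_central
    have hj1 : j ≠ 1 := by
      intro h
      rw [h, pow_one] at hjeq
      have hle : Subgroup.zpowers (⟨z, hzC⟩ : C) ≤ center C :=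
        Subgroup.zpowers_le.mpr hzC_central
      have hzc_ord : orderOf (⟨z, hzC⟩ : C) = p := by
        rw [← Subgroup.orderOf_coe (⟨z, hzC⟩ : C)]
        exact hz_order
      have hzp_card : Nat.card (Subgroup.zpowers (⟨z, hzC⟩ : C)) = p := by
        rw [Nat.card_zpowers, hzc_ord]
      have heq : Subgroup.zpowers (⟨z, hzC⟩ : C) = center C :=
        Subgroup.eq_of_le_of_card_ge hle (by rw [hjeq, hzp_card])
      have hxin : (⟨x, hxC⟩ : C) ∈ Subgroup.zpowers (⟨z, hzC⟩ : C) := by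
        rw [heq]; exact hxC_central
      obtain ⟨n, hn⟩ := hxin
      apply hxnotZ
      have : z ^ n = x := congrArg Subtype.val hn
      rw [← this]
      exact Subgroup.zpow_mem (center G) hzZ n
    have hp2dvd : p ^ 2 ∣ Nat.card (center C) := by
      rw [hjeq]
      exact pow_dvd_pow p (by omega)
    exact finish C hCnormal (aux_comm_of_big_center hCcard hp2dvd) hCcard
  · -- |Z| = p²
    have hq2 : Nat.card (G ⧸ center G) = p ^ 2 := by
      have hmul : Nat.card G = Nat.card (G ⧸ center G) * Nat.card (center G) :=
        Subgroup.card_eq_card_quotient_mul_card_subgroup (center G)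
      rw [hG, hkeq] at hmul
      have h4 : p ^ 4 = p ^ 2 * p ^ 2 := by ring
      rw [h4] at hmul
      exact Nat.eq_of_mul_eq_mul_right (Nat.pow_pos (n := 2) hp.pos) hmul.symm
    have hqcomm : ∀ a b : G ⧸ center G, a * b = b * a :=
      IsPGroup.commutative_of_card_eq_prime_sq hq2
    obtain ⟨S, hS⟩ := Sylow.exists_subgroup_card_pow_prime p (n := 1)
      (by rw [hq2]; exact pow_dvd_pow p one_le_two)
    rw [pow_one] at hS
    set N := S.comap (QuotientGroup.mk' (center G)) with hNdef
    have hNnormal : N.Normal := by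
      constructor
      intro n hn g
      show QuotientGroup.mk' (center G) (g * n * g⁻¹) ∈ S
      have : QuotientGroup.mk' (center G) (g * n * g⁻¹) = QuotientGroup.mk' (center G) n := by
        rw [map_mul, map_mul, map_inv,
          hqcomm (QuotientGroup.mk' (center G) g) (QuotientGroup.mk' (center G) n)]
        group
      rw [this]
      exact hn
    have hSindex : S.index = p := by
      have h1 := Subgroup.card_mul_index S
      rw [hS, hq2] at h1
      have h2 : p ^ 2 = p * p := by ring
      rw [h2] at h1
      exact Nat.eq_of_mul_eq_mul_left hp.pos h1
    have hNindex : N.index = p := by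
      rw [hNdef, Subgroup.index_comap_of_surjective S (QuotientGroup.mk'_surjective (center G)),
        hSindex]
    have hNcard : Nat.card N = p ^ 3 := by
      have h1 := Subgroup.card_mul_index N
      rw [hNindex, hG] at h1
      have h4 : p ^ 4 = p ^ 3 * p := by ring
      rw [h4] at h1
      exact Nat.eq_of_mul_eq_mul_right hp.pos h1
    have hScyc : IsCyclic S := isCyclic_of_prime_card hS
    have hNcomm : ∀ a b : ↥N, a * b = b * a := by
      let f : ↥N →* ↥S := ((QuotientGroup.mk' (center G)).domRestrict N).codRestrict S
        (fun x => x.2)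
      apply commutative_of_cyclic_center_quotient f
      intro n hn
      have hn1 : QuotientGroup.mk' (center G) (n : G) = 1 := by
        have := congrArg (Subtype.val) hn
        exact this
      have hnZ : (n : G) ∈ center G := by
        rw [← QuotientGroup.ker_mk' (center G)]
        exact hn1
      rw [Subgroup.mem_center_iff]
      intro m
      exact Subtype.ext (Subgroup.mem_center_iff.mp hnZ (m : G))
    exact finish N hNnormal hNcomm hNcard
  · -- |Z| = p³ : take the center itself
    refine finish (center G) (inferInstance)
      (fun a b => Subtype.ext (by exact (Subgroup.mem_center_iff.mp a.2 b.1).symm)) (by simpa using hkeq)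
  · -- |Z| = p⁴ : G is abelian
    have hZtop : center G = ⊤ := by
      apply Subgroup.eq_top_of_card_eq
      rw [hkeq, hG]
    have hcomm : ∀ a b : G, a * b = b * a := fun a b =>
      ((Subgroup.mem_center_iff.mp (hZtop ▸ Subgroup.mem_top a)) b).symm
    obtain ⟨N, hN⟩ := Sylow.exists_subgroup_card_pow_prime p (n := 3) (by rw [hG]; exact pow_dvd_pow p (by norm_num))
    refine finish N ⟨fun n hn g => ?_⟩ (fun a b => Subtype.ext (hcomm a b)) hN
    have : g * n * g⁻¹ = n := by rw [hcomm g n]; group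
    rwa [this]
end
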